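/- For the Bannai–Ito recurrence coefficients with parameters 𝔞 = α+iβ, 𝔟 = γ+iδ, 𝔠 = α-iβ, 𝔡 = γ-iδ (α, β, γ, δ real), the recurrence coefficient c_n = -i(2𝔞+1-A_n-C_n) is real for every nonnegative integer n; explicitly, for n even, c_n = 2β - (n+4α+2)(β-δ)/(n+2α+2γ+2) - n(β+δ)/(n+2α+2γ+1). -/

import Mathlib

open Complex

/-- Bannai–Ito recurrence coefficient `Aₙ`. -/
noncomputable def Acoef (a b c d : ℂ) (n : ℕ) : ℂ :=
  if Even n then
    ((n : ℂ) + 2*a + 2*c + 2) * ((n : ℂ) + 2*a + 2*d + 2) / (2 * ((n : ℂ) + a + b + c + d + 2))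
  else
    ((n : ℂ) + 2*a + 2*b + 2) * ((n : ℂ) + 2*a + 2*b + 2*c + 2*d + 3)
      / (2 * ((n : ℂ) + a + b + c + d + 2))

/-- Bannai–Ito recurrence coefficient `Cₙ`. -/
noncomputable def Ccoef (a b c d : ℂ) (n : ℕ) : ℂ :=
  if Even n then
    -((n : ℂ) * ((n : ℂ) + 2*c + 2*d + 1)) / (2 * ((n : ℂ) + a + b + c + d + 1))
  else
    -(((n : ℂ) + 2*b + 2*c + 1) * ((n : ℂ) + 2*b + 2*d + 1))
      / (2 * ((n : ℂ) + a + b + c + d + 1))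

/-- Diagonal recurrence coefficient `cₙ = -i(2𝔞 + 1 - Aₙ - Cₙ)` of the modified
Bannai–Ito polynomials. -/
noncomputable def ccoef (a b c d : ℂ) (n : ℕ) : ℂ :=
  -I * (2*a + 1 - Acoef a b c d n - Ccoef a b c d n)

/-!
For `𝔞 = α+iβ, 𝔟 = γ+iδ, 𝔠 = α-iβ, 𝔡 = γ-iδ` the sum `𝔞+𝔟+𝔠+𝔡 = 2α+2γ` is real, so the
denominators of `Aₙ` and `Cₙ` are the positive reals `2(n+2α+2γ+2)` and `2(n+2α+2γ+1)`.
Clearing them, `2𝔞+1-Aₙ-Cₙ` is `i` times a real rational function of `n, α, β, γ, δ`, and that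
function is `cₙ`.
-/

noncomputable def ccoefReal (α β γ δ : ℝ) (n : ℕ) : ℝ :=
  if Even n then
    2*β - ((n : ℝ) + 4*α + 2) * (β - δ) / ((n : ℝ) + 2*α + 2*γ + 2)
      - (n : ℝ) * (β + δ) / ((n : ℝ) + 2*α + 2*γ + 1)
  else
    2*β - (β + δ) * ((n : ℝ) + 4*α + 4*γ + 3) / ((n : ℝ) + 2*α + 2*γ + 2)
      - (β - δ) * ((n : ℝ) + 4*γ + 1) / ((n : ℝ) + 2*α + 2*γ + 1)

section ConjugateParameters

variable (α β γ δ : ℝ)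

lemma conj_params_sum_add (n : ℕ) (k : ℂ) :
    (n : ℂ) + ((α : ℂ) + β * I) + ((γ : ℂ) + δ * I) + ((α : ℂ) - β * I) + ((γ : ℂ) - δ * I) + k
      = (n : ℂ) + 2 * α + 2 * γ + k := by
  ring

lemma ccoef_conj_params {n : ℕ} (h₁ : (n : ℝ) + 2 * α + 2 * γ + 1 ≠ 0)
    (h₂ : (n : ℝ) + 2 * α + 2 * γ + 2 ≠ 0) :
    ccoef ((α : ℂ) + β * I) ((γ : ℂ) + δ * I) ((α : ℂ) - β * I) ((γ : ℂ) - δ * I) n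
      = ccoefReal α β γ δ n := by
  have h₁' : (n : ℂ) + 2 * α + 2 * γ + 1 ≠ 0 := by exact_mod_cast h₁
  have h₂' : (n : ℂ) + 2 * α + 2 * γ + 2 ≠ 0 := by exact_mod_cast h₂
  simp only [ccoef, Acoef, Ccoef, ccoefReal, conj_params_sum_add]
  split_ifs <;>
  · push_cast
    field_simp
    ring_nf
    simp only [I_sq]
    ring

end ConjugateParameters

/-- With `𝔞 = α+iβ, 𝔟 = γ+iδ, 𝔠 = α-iβ, 𝔡 = γ-iδ` (α, β, γ, δ real, α, γ > 0),
the coefficient `cₙ` is real for every `n`, and for `n` even it equals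
`2β - (n+4α+2)(β-δ)/(n+2α+2γ+2) - n(β+δ)/(n+2α+2γ+1)`. -/
theorem ccoef_real (α β γ δ : ℝ) (hα : 0 < α) (hγ : 0 < γ) (n : ℕ) :
    (ccoef ((α : ℂ) + β * I) ((γ : ℂ) + δ * I) ((α : ℂ) - β * I) ((γ : ℂ) - δ * I) n).im = 0 ∧
    (Even n →
      ccoef ((α : ℂ) + β * I) ((γ : ℂ) + δ * I) ((α : ℂ) - β * I) ((γ : ℂ) - δ * I) n
        = ((2*β - ((n : ℝ) + 4*α + 2) * (β - δ) / ((n : ℝ) + 2*α + 2*γ + 2)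
            - (n : ℝ) * (β + δ) / ((n : ℝ) + 2*α + 2*γ + 1) : ℝ) : ℂ)) := by
  have hc : ccoef ((α : ℂ) + β * I) ((γ : ℂ) + δ * I) ((α : ℂ) - β * I) ((γ : ℂ) - δ * I) n
      = ccoefReal α β γ δ n :=
    ccoef_conj_params α β γ δ (by positivity) (by positivity)
  refine ⟨by rw [hc, ofReal_im], fun hn => ?_⟩
  rw [hc, ccoefReal, if_pos hn]
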